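/- arXiv:1812.07330 — 3 statements merged into one kernel-verified Lean document; each statement's English description precedes it below -/
import Mathlib

section
/- Let φ be the Thue–Morse morphism on {0,1}* defined by φ(0)=01, φ(1)=10. For all k ≥ 1 and all words u, v: if u ∼_k v then φ(u) ∼_{k+1} φ(v). -/
/-- Number of occurrences of the second word as a (scattered) subword of the first. -/
def binom {α : Type*} [DecidableEq α] : List α → List α → ℕ
  | _, [] => 1
  | [], _ :: _ => 0
  | a :: u, b :: v => binom u (b :: v) + if a = b then binom u v else 0

/-- k-binomial equivalence. -/
def BinEq (k : ℕ) (u v : List Bool) : Prop :=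
  ∀ x : List Bool, x.length ≤ k → binom u x = binom v x

/-- The Thue–Morse word: `tm n` is the parity of the number of ones
in the binary expansion of `n` (`false` plays the role of the letter 0). -/
def tm (n : ℕ) : Bool := (Nat.digits 2 n).count 1 % 2 == 1

/-- `u` occurs as a (contiguous) factor of the Thue–Morse word. -/
def isFactorTM (u : List Bool) : Prop :=
  ∃ i : ℕ, u = (List.range u.length).map (fun j => tm (i + j))

/-- The Thue–Morse morphism φ(0)=01, φ(1)=10, extended to words. -/
def phiW (w : List Bool) : List Bool :=
  w.flatMap (fun a => if a then [true, false] else [false, true])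

/-!
An occurrence of `x` in `φ u` is determined by how its letters fall into the blocks `φ a` of
`φ u`: a block receives one letter of `x`, which it contains exactly once whatever `a` is, or two
letters `a b` with `a ≠ b`, and then it is the block `φ a`. Hence `binom (φ u) x` is a sum of
`binom u w` over a list `phiDecodings x` of words with `|w| ≤ |x|`. Those of length exactly `|x|`
are all the words of that length, each once, and contribute `choose |u| |x|`; the shorter ones
are controlled by `u ∼_k v`, and `|u| = |v|` because `k ≥ 1`.
-/

lemma sum_map_binom_cons_map_cons {α : Type*} [DecidableEq α] (a c : α) (u : List α)
    (l : List (List α)) :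
    ((l.map (List.cons c)).map (binom (a :: u))).sum =
      ((l.map (List.cons c)).map (binom u)).sum + if a = c then (l.map (binom u)).sum else 0 := by
  induction l with
  | nil => simp
  | cons w l ih =>
    simp only [List.map_cons, List.sum_cons, ih, binom]
    split <;> ring

lemma binom_false_add_binom_true (u : List Bool) : binom u [false] + binom u [true] = u.length := by
  induction u with
  | nil => simp [binom]
  | cons a u ih => cases a <;> simp [binom] <;> omega

lemma BinEq.length_eq {k : ℕ} (hk : 1 ≤ k) {u v : List Bool} (h : BinEq k u v) :
    u.length = v.length := by
  rw [← binom_false_add_binom_true, ← binom_false_add_binom_true,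
    h [false] (by simpa using hk), h [true] (by simpa using hk)]

lemma phiW_cons (a : Bool) (u : List Bool) : phiW (a :: u) = a :: (!a) :: phiW u := by
  cases a <;> simp [phiW]

def allWords : ℕ → List (List Bool)
  | 0 => [[]]
  | n + 1 => (allWords n).map (List.cons false) ++ (allWords n).map (List.cons true)

lemma sum_map_binom_allWords (u : List Bool) (n : ℕ) :
    ((allWords n).map (binom u)).sum = u.length.choose n := by
  induction u generalizing n with
  | nil => cases n <;> simp [allWords, binom, Function.comp_def]
  | cons a u ih =>
    cases n with
    | zero => simp [allWords, binom]
    | succ m =>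
      have hsucc := ih (m + 1)
      simp only [allWords, List.map_append, List.sum_append] at hsucc ⊢
      rw [sum_map_binom_cons_map_cons, sum_map_binom_cons_map_cons, ih, List.length_cons,
        Nat.choose_succ_succ, ← hsucc]
      cases a <;> simp <;> ring

/-- A letter of `w ∈ phiDecodings x` stands for a block of `φ u` receiving either one letter
of `x` (so both `false` and `true` are listed) or two letters `a b` with `a ≠ b` (so it is `a`). -/
def phiDecodings : List Bool → List (List Bool)
  | [] => [[]]
  | [_] => [[false], [true]]
  | a :: b :: x =>
      (phiDecodings (b :: x)).map (List.cons false) ++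
        (phiDecodings (b :: x)).map (List.cons true) ++
        if a ≠ b then (phiDecodings x).map (List.cons a) else []

lemma length_le_of_mem_phiDecodings {x w : List Bool} (hw : w ∈ phiDecodings x) :
    w.length ≤ x.length := by
  induction x using phiDecodings.induct generalizing w with
  | case1 => simp_all [phiDecodings]
  | case2 a => simp only [phiDecodings] at hw; aesop
  | case3 a b x ih₁ ih₂ =>
    simp only [phiDecodings, List.mem_append, List.mem_map] at hw
    rcases hw with (⟨w, hw, rfl⟩ | ⟨w, hw, rfl⟩) | hw
    · simpa using ih₁ hw
    · simpa using ih₁ hw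
    · split_ifs at hw
      · obtain ⟨w, hw', rfl⟩ := List.mem_map.1 hw
        simpa using (ih₂ hw').trans (Nat.le_succ _)
      · simp at hw

lemma ne_nil_of_mem_phiDecodings {x w : List Bool} (hx : x ≠ []) (hw : w ∈ phiDecodings x) :
    w ≠ [] := by
  match x with
  | [a] => simp only [phiDecodings] at hw; aesop
  | a :: b :: x => simp only [phiDecodings] at hw; aesop

lemma binom_phiW (u x : List Bool) :
    binom (phiW u) x = ((phiDecodings x).map (binom u)).sum := by
  induction u generalizing x with
  | nil =>
    match x with
    | [] => simp [phiW, phiDecodings, binom]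
    | e :: x =>
      have hzero : ∀ n ∈ (phiDecodings (e :: x)).map (binom []), n = 0 := by
        simp only [List.mem_map, forall_exists_index, and_imp, forall_apply_eq_imp_iff₂]
        intro w hw
        obtain ⟨c, w, rfl⟩ :=
          List.exists_cons_of_ne_nil (ne_nil_of_mem_phiDecodings (List.cons_ne_nil _ _) hw)
        rfl
      simp [phiW, binom, List.sum_eq_zero hzero]
  | cons a u ih =>
    rw [phiW_cons]
    match x with
    | [] => simp [phiDecodings, binom]
    | [e] => cases a <;> cases e <;> simp [binom, phiDecodings, ih] <;> ring
    | e :: f :: x =>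
      cases a <;> cases e <;> cases f <;>
        simp only [binom, phiDecodings, ih, sum_map_binom_cons_map_cons, List.map_append,
          List.sum_append, Bool.not_false, Bool.not_true, ne_eq, reduceIte, Bool.false_eq_true,
          Bool.true_eq_false, not_false_eq_true, not_true_eq_false, List.map_nil,
          List.sum_nil] <;>
        ring

lemma filter_length_eq_phiDecodings (x : List Bool) :
    (phiDecodings x).filter (fun w => w.length = x.length) = allWords x.length := by
  induction x using phiDecodings.induct with
  | case1 => simp [phiDecodings, allWords]
  | case2 a => simp [phiDecodings, allWords]
  | case3 a b x ih₁ _ =>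
    have hcons (c : Bool) (l : List (List Bool)) :
        (l.map (List.cons c)).filter (fun w => w.length = (a :: b :: x).length) =
          (l.filter fun w => w.length = (b :: x).length).map (List.cons c) := by
      simp [List.filter_map, Function.comp_def]
    have htwo : ((phiDecodings x).map (List.cons a)).filter
        (fun w => w.length = (a :: b :: x).length) = [] := by
      rw [hcons, List.filter_eq_nil_iff.2, List.map_nil]
      intro w hw
      have := length_le_of_mem_phiDecodings hw
      simp only [List.length_cons, decide_eq_true_eq]
      omega
    rw [phiDecodings, List.filter_append, List.filter_append, hcons, hcons, ih₁]
    split_ifs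
    · rw [htwo, List.append_nil]; rfl
    · rw [List.filter_nil, List.append_nil]; rfl

theorem binEq_phi (k : ℕ) (hk : 1 ≤ k) (u v : List Bool) (h : BinEq k u v) :
    BinEq (k + 1) (phiW u) (phiW v) := by
  intro x hx
  have hshort : ∀ w ∈ (phiDecodings x).filter (fun w => ¬w.length = x.length),
      binom u w = binom v w := by
    intro w hw
    obtain ⟨hmem, hne⟩ := List.mem_filter.1 hw
    have := length_le_of_mem_phiDecodings hmem
    exact h w (by simp at hne; omega)
  rw [binom_phiW, binom_phiW,
    ← List.sum_map_filter_add_sum_map_filter_not (fun w => w.length = x.length) (binom u),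
    ← List.sum_map_filter_add_sum_map_filter_not (fun w => w.length = x.length) (binom v),
    filter_length_eq_phiDecodings, sum_map_binom_allWords, sum_map_binom_allWords,
    h.length_eq hk, List.map_congr_left hshort]
end

section
/- Ochsenschläger's theorem (first part): let φ be the Thue–Morse morphism φ(0)=01, φ(1)=10. For all k ≥ 1, φ^k(0) ∼_k φ^k(1), i.e., binom(φ^k(0), x) = binom(φ^k(1), x) for all words x of length at most k. Consequently, if |u| = |v| then φ^k(u) ∼_k φ^k(v). -/
/-!
Since `φ^(n+1)(a) = φ^n(a) φ^n(ā)`, the two words `φ^(n+1)(0)` and `φ^(n+1)(1)` are `AB` and `BA`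
with `A = φ^n(0)`, `B = φ^n(1)`. Counting occurrences of `x` in a concatenation by where `x` is cut,
`binom(AB, x)` and `binom(BA, x)` share the two uncut terms `binom(A, x) + binom(B, x)`, and every
properly cut term involves only factors of `x` of length `< |x|`. Hence `A ∼_n B` gives
`AB ∼_(n+1) BA`, and induction from `φ^0(0) ∼_0 φ^0(1)` proves the first part. The second follows
because `∼_k` is compatible with concatenation.
-/

@[simp]
lemma binom_nil_right {α : Type*} [DecidableEq α] (u : List α) : binom u [] = 1 := by
  cases u <;> rfl

lemma binom_append {α : Type*} [DecidableEq α] (u v x : List α) :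
    binom (u ++ v) x =
      ∑ i ∈ Finset.range (x.length + 1), binom u (x.take i) * binom v (x.drop i) := by
  induction u generalizing x with
  | nil =>
    cases x with
    | nil => simp
    | cons b t =>
      rw [Finset.sum_range_succ']
      simp [binom]
  | cons a u ih =>
    cases x with
    | nil => simp
    | cons b t =>
      show binom (u ++ v) (b :: t) + (if a = b then binom (u ++ v) t else 0) = _
      rw [ih (b :: t), ih t, List.length_cons, Finset.sum_range_succ',
        Finset.sum_range_succ' (n := t.length + 1)]
      simp only [List.take_succ_cons, List.drop_succ_cons, List.take_zero, List.drop_zero,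
        binom, binom_nil_right, one_mul, add_mul, ite_mul, zero_mul, Finset.sum_add_distrib]
      split_ifs
      · ring
      · simp

lemma binom_append_cons {α : Type*} [DecidableEq α] (u v t : List α) (b : α) :
    binom (u ++ v) (b :: t) = binom u (b :: t) + binom v (b :: t) +
      ∑ i ∈ Finset.range t.length, binom u (b :: t.take i) * binom v (t.drop i) := by
  rw [binom_append, List.length_cons, Finset.sum_range_succ', Finset.sum_range_succ]
  simp only [List.take_succ_cons, List.drop_succ_cons, List.take_length, List.drop_length,
    List.take_zero, List.drop_zero, binom_nil_right, mul_one, one_mul]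
  ring

lemma binEq_refl (k : ℕ) (u : List Bool) : BinEq k u u := fun _ _ => rfl

lemma BinEq.symm {k : ℕ} {u v : List Bool} (h : BinEq k u v) : BinEq k v u :=
  fun x hx => (h x hx).symm

lemma BinEq.append {k : ℕ} {u u' v v' : List Bool} (hu : BinEq k u u') (hv : BinEq k v v') :
    BinEq k (u ++ v) (u' ++ v') := by
  intro x hx
  rw [binom_append, binom_append]
  refine Finset.sum_congr rfl fun i _ => ?_
  rw [hu _ ((List.length_take_le' _ _).trans hx), hv _ (by rw [List.length_drop]; omega)]

lemma BinEq.succ_append_comm {k : ℕ} {u v : List Bool} (h : BinEq k u v) :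
    BinEq (k + 1) (u ++ v) (v ++ u) := by
  rintro (_ | ⟨b, t⟩) hx
  · simp
  rw [List.length_cons] at hx
  rw [binom_append_cons, binom_append_cons, add_comm (binom u _)]
  congr 1
  refine Finset.sum_congr rfl fun i hi => ?_
  have hi : i < t.length := Finset.mem_range.mp hi
  rw [h _ (by simp; omega), h _ (by simp; omega)]

lemma phiW_append (u v : List Bool) : phiW (u ++ v) = phiW u ++ phiW v := by
  simp [phiW]

lemma phiW_iterate_append (n : ℕ) (u v : List Bool) :
    phiW^[n] (u ++ v) = phiW^[n] u ++ phiW^[n] v := by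
  induction n generalizing u v with
  | zero => rfl
  | succ n ih => simp only [Function.iterate_succ_apply', ih, phiW_append]

lemma phiW_iterate_succ_singleton (n : ℕ) (a : Bool) :
    phiW^[n + 1] [a] = phiW^[n] [a] ++ phiW^[n] [!a] := by
  rw [Function.iterate_succ_apply, ← phiW_iterate_append]
  cases a <;> rfl

lemma binEq_phiW_iterate_false_true (n : ℕ) :
    BinEq n (phiW^[n] [false]) (phiW^[n] [true]) := by
  induction n with
  | zero => rintro (_ | _) hx <;> simp_all
  | succ n ih =>
    rw [phiW_iterate_succ_singleton, phiW_iterate_succ_singleton]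
    exact ih.succ_append_comm

lemma binEq_phiW_iterate_singleton (n : ℕ) (a b : Bool) :
    BinEq n (phiW^[n] [a]) (phiW^[n] [b]) := by
  cases a <;> cases b
  · exact binEq_refl _ _
  · exact binEq_phiW_iterate_false_true n
  · exact (binEq_phiW_iterate_false_true n).symm
  · exact binEq_refl _ _

lemma binEq_phiW_iterate_of_length_eq (n : ℕ) :
    ∀ u v : List Bool, u.length = v.length → BinEq n (phiW^[n] u) (phiW^[n] v)
  | [], [], _ => binEq_refl _ _
  | a :: u, b :: v, h => by
    rw [← List.singleton_append, ← List.singleton_append (l := v), phiW_iterate_append,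
      phiW_iterate_append]
    exact (binEq_phiW_iterate_singleton n a b).append
      (binEq_phiW_iterate_of_length_eq n u v (by simpa using h))

theorem ochsenschlaeger_first_general (k : ℕ) :
    BinEq k (phiW^[k] [false]) (phiW^[k] [true]) ∧
    ∀ u v : List Bool, u.length = v.length → BinEq k (phiW^[k] u) (phiW^[k] v) :=
  ⟨binEq_phiW_iterate_false_true k, binEq_phiW_iterate_of_length_eq k⟩

theorem ochsenschlaeger_first (k : ℕ) (hk : 1 ≤ k) :
    BinEq k (phiW^[k] [false]) (phiW^[k] [true]) ∧
    ∀ u v : List Bool, u.length = v.length → BinEq k (phiW^[k] u) (phiW^[k] v) :=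
  ochsenschlaeger_first_general k
end

section
/- For all natural numbers m ∈ ℕ and letters a, b ∈ {0,1}, there exists a word z of length m over {0,1} such that a·z·b occurs as a factor of the Thue–Morse word. -/
/-!
Doubling an index preserves `tm`, and doubling plus one flips it. Hence a pair `(a, b)` at distance
`f` yields the pair `(a, b)` at distance `2f`, and a pair `(¬a, b)` at distance `f + 1` yields the
pair `(a, b)` at distance `2f + 1`; by strong induction every pair of letters occurs at every
positive distance, the distance-one pairs `00, 01, 10, 11` being visible in `0110100110…`. The
letters strictly between such an occurrence form the word `z`.
-/

theorem tm_two_mul (n : ℕ) : tm (2 * n) = tm n := by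
  rcases n.eq_zero_or_pos with rfl | hn
  · rfl
  · simp only [tm, Nat.digits_base_mul one_lt_two hn,
      List.count_cons_of_ne (by decide : (0 : ℕ) ≠ 1)]

theorem tm_two_mul_add_one (n : ℕ) : tm (2 * n + 1) = !tm n := by
  rw [tm, tm, add_comm, Nat.digits_add 2 one_lt_two 1 n one_lt_two (Or.inl one_ne_zero),
    List.count_cons_self]
  cases (Nat.mod_two_eq_zero_or_one ((Nat.digits 2 n).count 1)) <;> simp_all [Nat.add_mod]

theorem exists_tm_eq_and_tm_add_eq (d : ℕ) (hd : 0 < d) (a b : Bool) :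
    ∃ i, tm i = a ∧ tm (i + d) = b := by
  induction d using Nat.strong_induction_on generalizing a b with
  | _ d ih =>
  rcases Nat.even_or_odd' d with ⟨f, rfl | rfl⟩
  · obtain ⟨i, ha, hb⟩ := ih f (by omega) (by omega) a b
    exact ⟨2 * i, by rw [tm_two_mul, ha], by rw [← mul_add, tm_two_mul, hb]⟩
  · rcases f.eq_zero_or_pos with rfl | hf
    · cases a <;> cases b
      exacts [⟨5, by decide, by decide⟩, ⟨0, by decide, by decide⟩,
        ⟨2, by decide, by decide⟩, ⟨1, by decide, by decide⟩]
    · obtain ⟨j, ha, hb⟩ := ih (f + 1) (by omega) (by omega) (!a) b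
      refine ⟨2 * j + 1, by rw [tm_two_mul_add_one, ha, Bool.not_not], ?_⟩
      rw [show 2 * j + 1 + (2 * f + 1) = 2 * (j + (f + 1)) by ring, tm_two_mul, hb]

theorem isFactorTM_map_range (i n : ℕ) : isFactorTM ((List.range n).map fun j => tm (i + j)) :=
  ⟨i, by rw [List.length_map, List.length_range]⟩

theorem List.map_range_add_two {α : Type*} (f : ℕ → α) (m : ℕ) :
    (List.range (m + 2)).map f = f 0 :: ((List.range m).map fun j => f (j + 1)) ++ [f (m + 1)] := by
  rw [List.range_succ, List.range_succ_eq_map]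
  simp

theorem letters_appear (m : ℕ) (a b : Bool) :
    ∃ z : List Bool, z.length = m ∧ isFactorTM (a :: (z ++ [b])) := by
  obtain ⟨i, ha, hb⟩ := exists_tm_eq_and_tm_add_eq (m + 1) m.succ_pos a b
  refine ⟨(List.range m).map fun j => tm (i + (j + 1)), by simp, ?_⟩
  have hfactor := isFactorTM_map_range i (m + 2)
  rwa [List.map_range_add_two, add_zero, ha, hb] at hfactor
end
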